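/- arXiv:1112.5831 — 2 statements merged into one kernel-verified Lean document; each statement's English description precedes it below -/
import Mathlib

section
/- Let V be a finite-dimensional complex vector space, Λ ⊂ V a full lattice, τ : V → V an ℝ-linear involution with τ(Λ) ⊂ Λ. Then the fixed point set of the induced involution on T = V/Λ is the disjoint union over classes [μ] ∈ (½Λ^{-τ})/(½(1-τ)Λ) of the translates (V^τ/Λ^τ) + [μ]; in particular every fixed point [v] ∈ T^τ satisfies v - τ(v) ∈ Λ, and [v] lies in the translate indexed by [½(v - τv)]. -/
/-!
Write `x = w + μ` with `τ w = w` and `τ μ = -μ`. Then `x - τ x = 2μ`, so `[x]` is fixed exactly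
when `2μ ∈ Λ`. Every `v` splits this way as `½(v + τv) + ½(v - τv)`, and if `w + μ ≡ w' + μ'`
modulo `Λ`, the difference `λ` satisfies `λ - τλ = 2(μ - μ')`.
-/

namespace LinearMap

section Ring

variable {R M : Type*} [Ring R] [AddCommGroup M] [Module R M] {τ : M →ₗ[R] M}

theorem sub_apply_add_of_apply_eq_self_of_apply_eq_neg {w μ : M} (hw : τ w = w)
    (hμ : τ μ = -μ) : (w + μ) - τ (w + μ) = μ + μ := by
  rw [map_add, hw, hμ]
  abel

theorem apply_smul_add_apply_eq_self (hinv : ∀ v, τ (τ v) = v) (c : R) (v : M) :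
    τ (c • (v + τ v)) = c • (v + τ v) := by
  rw [map_smul, map_add, hinv, add_comm]

end Ring

theorem eq_half_add_apply_add_half_sub_apply {K M : Type*} [Field K] [CharZero K]
    [AddCommGroup M] [Module K M] (τ : M →ₗ[K] M) (v : M) :
    v = (2⁻¹ : K) • (v + τ v) + (2⁻¹ : K) • (v - τ v) := by
  module

end LinearMap

theorem QuotientAddGroup.mk_apply_eq_mk_iff {G : Type*} [AddCommGroup G] {Λ : AddSubgroup G}
    (f : G → G) (v : G) : (f v : G ⧸ Λ) = v ↔ v - f v ∈ Λ := by
  rw [QuotientAddGroup.eq_iff_sub_mem, sub_mem_comm_iff]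

theorem fixed_locus_of_torus_involution_general {V : Type*} [AddCommGroup V] [Module ℝ V]
    (Λ : AddSubgroup V) (τ : V →ₗ[ℝ] V)
    (hinv : ∀ v, τ (τ v) = v) :
    (∀ v : V, (QuotientAddGroup.mk (s := Λ) (τ v) = QuotientAddGroup.mk v) →
      (v - τ v ∈ Λ ∧ ∃ w : V, τ w = w ∧
        QuotientAddGroup.mk (s := Λ) v =
          QuotientAddGroup.mk (w + (2⁻¹ : ℝ) • (v - τ v)))) ∧
    (∀ w μ : V, τ w = w → τ μ = -μ → μ + μ ∈ Λ →
      QuotientAddGroup.mk (s := Λ) (τ (w + μ)) = QuotientAddGroup.mk (w + μ)) ∧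
    (∀ w w' μ μ' : V, τ w = w → τ w' = w' → τ μ = -μ → τ μ' = -μ' →
      μ + μ ∈ Λ → μ' + μ' ∈ Λ →
      QuotientAddGroup.mk (s := Λ) (w + μ) = QuotientAddGroup.mk (w' + μ') →
      ∃ lam ∈ Λ, μ - μ' = (2⁻¹ : ℝ) • (lam - τ lam)) := by
  refine ⟨fun v hv => ⟨(QuotientAddGroup.mk_apply_eq_mk_iff τ v).mp hv, (2⁻¹ : ℝ) • (v + τ v),
      τ.apply_smul_add_apply_eq_self hinv _ v,
      congrArg _ (τ.eq_half_add_apply_add_half_sub_apply v)⟩,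
    fun w μ hw hμ hμΛ => ?_, fun w w' μ μ' hw hw' hμ hμ' _ _ hq => ?_⟩
  · rwa [QuotientAddGroup.mk_apply_eq_mk_iff,
      LinearMap.sub_apply_add_of_apply_eq_self_of_apply_eq_neg hw hμ]
  · refine ⟨(w + μ) - (w' + μ'), QuotientAddGroup.eq_iff_sub_mem.mp hq, ?_⟩
    have htwice : ((w + μ) - (w' + μ')) - τ ((w + μ) - (w' + μ')) = (μ + μ) - (μ' + μ') := by
      rw [← LinearMap.sub_apply_add_of_apply_eq_self_of_apply_eq_neg hw hμ,
        ← LinearMap.sub_apply_add_of_apply_eq_self_of_apply_eq_neg hw' hμ', map_sub]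
      abel
    rw [htwice]
    module

/-- The fixed point set of the involution induced on `T = V/Λ` by a linear involution
`τ` preserving `Λ` is the disjoint union, over classes `[μ] ∈ (½Λ^{-τ})/(½(1-τ)Λ)`,
of the translates `(V^τ/Λ^τ) + [μ]`. -/
theorem fixed_locus_of_torus_involution {V : Type*} [AddCommGroup V] [Module ℝ V]
    (Λ : AddSubgroup V) (τ : V →ₗ[ℝ] V)
    (hinv : ∀ v, τ (τ v) = v) (hΛ : ∀ x ∈ Λ, τ x ∈ Λ) :
    (∀ v : V, (QuotientAddGroup.mk (s := Λ) (τ v) = QuotientAddGroup.mk v) →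
      (v - τ v ∈ Λ ∧ ∃ w : V, τ w = w ∧
        QuotientAddGroup.mk (s := Λ) v =
          QuotientAddGroup.mk (w + (2⁻¹ : ℝ) • (v - τ v)))) ∧
    (∀ w μ : V, τ w = w → τ μ = -μ → μ + μ ∈ Λ →
      QuotientAddGroup.mk (s := Λ) (τ (w + μ)) = QuotientAddGroup.mk (w + μ)) ∧
    (∀ w w' μ μ' : V, τ w = w → τ w' = w' → τ μ = -μ → τ μ' = -μ' →
      μ + μ ∈ Λ → μ' + μ' ∈ Λ →
      QuotientAddGroup.mk (s := Λ) (w + μ) = QuotientAddGroup.mk (w' + μ') →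
      ∃ lam ∈ Λ, μ - μ' = (2⁻¹ : ℝ) • (lam - τ lam)) :=
  fixed_locus_of_torus_involution_general Λ τ hinv
end

section
/- With notation as above, the number of connected components of the fixed locus T^τ equals the index [½Λ^{-τ} : ½(1-τ)Λ] = [Λ^{-τ} : (1-τ)Λ], which is a power of 2. -/
/-- The subgroup `Λ^{-τ} = {λ ∈ Λ | τλ = -λ}` of anti-invariant lattice vectors,
as an additive subgroup of `V`. -/
def negPart {V : Type*} [AddCommGroup V] [Module ℝ V]
    (Λ : AddSubgroup V) (τ : V →ₗ[ℝ] V) : AddSubgroup V where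
  carrier := {x | x ∈ Λ ∧ τ x = -x}
  zero_mem' := ⟨Λ.zero_mem, by simp⟩
  add_mem' := by
    rintro a b ⟨ha, ha'⟩ ⟨hb, hb'⟩
    exact ⟨Λ.add_mem ha hb, by simp [ha', hb', add_comm]⟩
  neg_mem' := by
    rintro a ⟨ha, ha'⟩
    exact ⟨Λ.neg_mem ha, by simp [ha']⟩

/-- The subgroup `(1-τ)Λ = {λ - τλ | λ ∈ Λ}` of `V`. -/
def oneMinusTauPart {V : Type*} [AddCommGroup V] [Module ℝ V]
    (Λ : AddSubgroup V) (τ : V →ₗ[ℝ] V) : AddSubgroup V :=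
  Λ.map (LinearMap.id - τ).toAddMonoidHom

/-! The map `v ↦ v - τ v` descends to `V ⧸ Λ → V ⧸ (1-τ)Λ`. On the fixed locus
`T^τ = {[v] | v - τ v ∈ Λ}` it is locally constant, since `Λ` is discrete, and its image is
the image of `Λ^{-τ}` (`λ ∈ Λ^{-τ}` is hit at `[λ/2]`). Two fixed points `[v]`, `[v']` with the
same value satisfy `v' ≡ v + w mod Λ` with `τ w = w`, so the segment `t ↦ [v + t • w]` joins
them inside `T^τ`. Hence the components of `T^τ` correspond to `Λ^{-τ}/(1-τ)Λ`, a finitely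
generated group killed by `2`, hence of order a power of `2`. -/

theorem IsLocallyConstant.of_comp_of_isOpenMap {X Y Z : Type*} [TopologicalSpace X]
    [TopologicalSpace Y] {f : X → Y} {g : Y → Z} (hf : IsOpenMap f)
    (hsurj : Function.Surjective f) (h : IsLocallyConstant (g ∘ f)) : IsLocallyConstant g :=
  fun s => by simpa only [Set.preimage_comp, Set.image_preimage_eq _ hsurj] using hf _ (h s)

theorem IsLocallyConstant.natCard_connectedComponents {X Y : Type*} [TopologicalSpace X]
    {f : X → Y} (hf : IsLocallyConstant f)
    (hfib : ∀ x y, f x = f y → y ∈ connectedComponent x) :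
    Nat.card (ConnectedComponents X) = Nat.card (Set.range f) := by
  let g : ConnectedComponents X → Set.range f :=
    Quotient.lift (Set.rangeFactorization f) fun x y hxy => Subtype.ext <|
      hf.apply_eq_of_isPreconnected isPreconnected_connectedComponent mem_connectedComponent
        ((hxy : connectedComponent x = connectedComponent y) ▸ mem_connectedComponent)
  refine Nat.card_eq_of_bijective g ⟨?_, ?_⟩
  · rintro ⟨x⟩ ⟨y⟩ hxy
    exact (ConnectedComponents.coe_eq_coe'.mpr (hfib x y (congrArg Subtype.val hxy))).symm
  · rintro ⟨_, x, rfl⟩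
    exact ⟨ConnectedComponents.mk x, rfl⟩

theorem AddSubgroup.exists_index_eq_two_pow {G : Type*} [AddCommGroup G] [AddGroup.FG G]
    {H : AddSubgroup G} (h2 : ∀ x, 2 • x ∈ H) : ∃ k, H.index = 2 ^ k := by
  let _ := QuotientAddGroup.zmodModule h2
  have : Module.Finite ℤ (G ⧸ H) := Module.Finite.iff_addGroup_fg.mpr inferInstance
  have : Module.Finite (ZMod 2) (G ⧸ H) := Module.Finite.of_restrictScalars_finite ℤ _ _
  exact ⟨_, (Module.natCard_eq_pow_finrank (K := ZMod 2)).trans (by rw [Nat.card_zmod])⟩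

theorem AddSubgroup.index_addSubgroupOf_eq_natCard_map {G : Type*} [AddCommGroup G]
    (H K : AddSubgroup G) :
    (H.addSubgroupOf K).index = Nat.card (K.map (QuotientAddGroup.mk' H)) := by
  rw [← AddSubgroup.relIndex, ← AddSubgroup.relIndex_ker, QuotientAddGroup.ker_mk']

section Algebra

variable {V : Type*} [AddCommGroup V] [Module ℝ V] (Λ : AddSubgroup V) (τ : V →ₗ[ℝ] V)

theorem two_nsmul_mem_oneMinusTauPart (x : negPart Λ τ) :
    2 • x ∈ (oneMinusTauPart Λ τ).addSubgroupOf (negPart Λ τ) :=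
  ⟨x, x.2.1, show x.1 - τ x.1 = (2 • x.1 : V) by rw [x.2.2, sub_neg_eq_add, two_nsmul]⟩

def quotientOneSubTau : V ⧸ Λ →+ V ⧸ oneMinusTauPart Λ τ :=
  QuotientAddGroup.map _ _ (LinearMap.id - τ).toAddMonoidHom fun x hx => ⟨x, hx, rfl⟩

@[simp]
theorem quotientOneSubTau_mk (v : V) :
    quotientOneSubTau Λ τ v = ((v - τ v : V) : V ⧸ oneMinusTauPart Λ τ) :=
  rfl

end Algebra

theorem negPart_fg {V : Type*} [AddCommGroup V] [Module ℝ V] (Λ : Submodule ℤ V)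
    [Module.Finite ℤ Λ] (τ : V →ₗ[ℝ] V) :
    AddGroup.FG (negPart Λ.toAddSubgroup τ) := by
  have : IsNoetherian ℤ Λ := isNoetherian_of_isNoetherianRing_of_finite ℤ Λ
  have : IsNoetherian ℤ (AddSubgroup.toIntSubmodule (negPart Λ.toAddSubgroup τ)) :=
    isNoetherian_of_le fun _ hx => hx.1
  exact Module.Finite.iff_addGroup_fg.mp
    (inferInstance : Module.Finite ℤ (AddSubgroup.toIntSubmodule (negPart Λ.toAddSubgroup τ)))

section Torus

variable {V : Type*} [NormedAddCommGroup V] [NormedSpace ℝ V] (Λ : Submodule ℤ V)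
  (τ : V →ₗ[ℝ] V) {τbar : V ⧸ Λ.toAddSubgroup → V ⧸ Λ.toAddSubgroup}
  (hτbar : ∀ v : V, τbar (QuotientAddGroup.mk v) = QuotientAddGroup.mk (τ v))
include hτbar

theorem mk_mem_fixedPoints_iff {v : V} :
    τbar (QuotientAddGroup.mk v) = QuotientAddGroup.mk v ↔ v - τ v ∈ Λ := by
  rw [hτbar, QuotientAddGroup.eq, neg_add_eq_sub]
  rfl

theorem mem_connectedComponent_fixedPoints_of_eq_add {x y : {x // τbar x = x}} {v w : V}
    (hx : x.1 = v) (hw : τ w = w) (hy : y.1 = ↑(v + w)) : y ∈ connectedComponent x := by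
  have hv : v - τ v ∈ Λ := (mk_mem_fixedPoints_iff Λ τ hτbar).1 (hx ▸ x.2)
  have hfix (t : ℝ) : τbar ↑(v + t • w) = ↑(v + t • w) := by
    rwa [mk_mem_fixedPoints_iff Λ τ hτbar, map_add, map_smul, hw, add_sub_add_right_eq_sub]
  let c : ℝ → {x // τbar x = x} := fun t => ⟨_, hfix t⟩
  have hc : Continuous c :=
    (QuotientAddGroup.continuous_mk.comp (by fun_prop)).subtype_mk _
  have hc0 : c 0 = x := Subtype.ext (by simp [c, hx])
  have hc1 : c 1 = y := Subtype.ext (by simp [c, hy])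
  exact hc0 ▸ hc1 ▸ (isPreconnected_range hc).subset_connectedComponent ⟨0, rfl⟩ ⟨1, rfl⟩

theorem mem_connectedComponent_of_quotientOneSubTau_eq {x y : {x // τbar x = x}}
    (h : quotientOneSubTau Λ.toAddSubgroup τ x.1 = quotientOneSubTau Λ.toAddSubgroup τ y.1) :
    y ∈ connectedComponent x := by
  obtain ⟨v, hv⟩ := QuotientAddGroup.mk_surjective x.1
  obtain ⟨v', hv'⟩ := QuotientAddGroup.mk_surjective y.1
  rw [← hv, ← hv', quotientOneSubTau_mk, quotientOneSubTau_mk, QuotientAddGroup.eq] at h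
  obtain ⟨ν, hν, hνeq : ν - τ ν = -(v - τ v) + (v' - τ v')⟩ := h
  refine mem_connectedComponent_fixedPoints_of_eq_add Λ τ hτbar hv.symm (w := v' - v - ν) ?_ ?_
  · rw [map_sub, map_sub]
    linear_combination (norm := module) hνeq
  · rw [← hv', QuotientAddGroup.eq, show -v' + (v + (v' - v - ν)) = -ν by abel]
    exact Λ.neg_mem hν

theorem isLocallyConstant_quotientOneSubTau_fixedPoints [FiniteDimensional ℝ V]
    [DiscreteTopology Λ] :
    IsLocallyConstant fun x : {x // τbar x = x} => quotientOneSubTau Λ.toAddSubgroup τ x.1 := by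
  refine IsLocallyConstant.of_comp_of_isOpenMap
    (QuotientAddGroup.isOpenMap_coe.restrictPreimage {x | τbar x = x})
    (Set.restrictPreimage_surjective _ QuotientAddGroup.mk_surjective) ?_
  let s : QuotientAddGroup.mk ⁻¹' {x | τbar x = x} → Λ :=
    fun v => ⟨v.1 - τ v.1, (mk_mem_fixedPoints_iff Λ τ hτbar).1 v.2⟩
  have hτ := τ.continuous_of_finiteDimensional
  have hs : Continuous s := Continuous.subtype_mk (by fun_prop) _
  exact ((IsLocallyConstant.iff_continuous s).2 hs).comp
    fun l : Λ => (l : V ⧸ oneMinusTauPart Λ.toAddSubgroup τ)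

theorem range_quotientOneSubTau_fixedPoints (hinv : ∀ v, τ (τ v) = v) :
    Set.range (fun x : {x // τbar x = x} => quotientOneSubTau Λ.toAddSubgroup τ x.1) =
      ((negPart Λ.toAddSubgroup τ).map
        (QuotientAddGroup.mk' (oneMinusTauPart Λ.toAddSubgroup τ)) : Set _) := by
  ext y
  constructor
  · rintro ⟨⟨x, hx⟩, rfl⟩
    obtain ⟨v, rfl⟩ := QuotientAddGroup.mk_surjective x
    exact ⟨v - τ v, ⟨(mk_mem_fixedPoints_iff Λ τ hτbar).1 hx, by rw [map_sub, hinv, neg_sub]⟩,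
      rfl⟩
  · rintro ⟨n, ⟨hnΛ, hnτ⟩, rfl⟩
    have half : (2⁻¹ : ℝ) • n - τ ((2⁻¹ : ℝ) • n) = n := by rw [map_smul, hnτ]; module
    exact ⟨⟨↑((2⁻¹ : ℝ) • n), (mk_mem_fixedPoints_iff Λ τ hτbar).2 (by rw [half]; exact hnΛ)⟩,
      congrArg _ half⟩

end Torus

theorem card_components_fixed_locus_general {V : Type*} [NormedAddCommGroup V]
    [NormedSpace ℝ V] [FiniteDimensional ℝ V]
    (Λ : Submodule ℤ V) [DiscreteTopology Λ]
    (τ : V →ₗ[ℝ] V) (hinv : ∀ v, τ (τ v) = v)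
    (τbar : (V ⧸ Λ.toAddSubgroup) → (V ⧸ Λ.toAddSubgroup))
    (hτbar : ∀ v : V, τbar (QuotientAddGroup.mk v) = QuotientAddGroup.mk (τ v)) :
    Nat.card (ConnectedComponents {x : V ⧸ Λ.toAddSubgroup // τbar x = x}) =
      ((oneMinusTauPart Λ.toAddSubgroup τ).addSubgroupOf
        (negPart Λ.toAddSubgroup τ)).index ∧
    ∃ k : ℕ, ((oneMinusTauPart Λ.toAddSubgroup τ).addSubgroupOf
        (negPart Λ.toAddSubgroup τ)).index = 2 ^ k := by
  refine ⟨?_, ?_⟩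
  · rw [AddSubgroup.index_addSubgroupOf_eq_natCard_map, ← SetLike.coe_sort_coe,
      ← range_quotientOneSubTau_fixedPoints Λ τ hτbar hinv]
    exact (isLocallyConstant_quotientOneSubTau_fixedPoints Λ τ hτbar).natCard_connectedComponents
      fun _ _ => mem_connectedComponent_of_quotientOneSubTau_eq Λ τ hτbar
  · have := negPart_fg Λ τ
    exact AddSubgroup.exists_index_eq_two_pow (two_nsmul_mem_oneMinusTauPart _ τ)

/-- The number of connected components of the fixed locus `T^τ` of the induced
involution on the torus `T = V/Λ` equals the index `[Λ^{-τ} : (1-τ)Λ]`, which is a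
power of `2`. -/
theorem card_components_fixed_locus {V : Type*} [NormedAddCommGroup V]
    [NormedSpace ℝ V] [FiniteDimensional ℝ V]
    (Λ : Submodule ℤ V) [DiscreteTopology Λ] [IsZLattice ℝ Λ]
    (τ : V →ₗ[ℝ] V) (hinv : ∀ v, τ (τ v) = v) (hΛ : ∀ x ∈ Λ, τ x ∈ Λ)
    (τbar : (V ⧸ Λ.toAddSubgroup) → (V ⧸ Λ.toAddSubgroup))
    (hτbar : ∀ v : V, τbar (QuotientAddGroup.mk v) = QuotientAddGroup.mk (τ v)) :
    Nat.card (ConnectedComponents {x : V ⧸ Λ.toAddSubgroup // τbar x = x}) =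
      ((oneMinusTauPart Λ.toAddSubgroup τ).addSubgroupOf
        (negPart Λ.toAddSubgroup τ)).index ∧
    ∃ k : ℕ, ((oneMinusTauPart Λ.toAddSubgroup τ).addSubgroupOf
        (negPart Λ.toAddSubgroup τ)).index = 2 ^ k :=
  card_components_fixed_locus_general Λ τ hinv τbar hτbar
end
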